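/- arXiv:1810.00975 — 2 statements merged into one kernel-verified Lean document; each statement's English description precedes it below -/
import Mathlib

section
/- Let α > β > 0 and let h : [0,τ] → ℝ be nonnegative with ∫₀^τ h(a) da = 1. Then there exists γ ∈ (0, α − β) such that β ∫₀^τ h(a) e^{γ a} da + γ = α. -/
/-!
Set `F γ = β ∫₀^τ h(a) e^{γa} da + γ`. The parameter integral is continuous in `γ` by
dominated convergence, and `F 0 = β < α`. Since `h ≥ 0` has integral `1`, it is positive on
a subset of `(0, τ]` of positive measure, where `e^{(α-β)a} > 1`; hence
`∫₀^τ h(a) e^{(α-β)a} da > 1` and `F (α - β) > β + (α - β) = α`. The intermediate value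
theorem gives the root.
-/

open Set Real MeasureTheory intervalIntegral

theorem continuous_intervalIntegral_mul_exp {f : ℝ → ℝ} {a b : ℝ}
    (hf : IntervalIntegrable f volume a b) :
    Continuous fun γ => ∫ t in a..b, f t * exp (γ * t) := by
  refine continuous_iff_continuousAt.2 fun γ₀ => ?_
  refine continuousAt_of_dominated_interval
    (bound := fun t => |f t| * exp ((|γ₀| + 1) * (|a| + |b - a|))) ?_ ?_ ?_ ?_
  · exact Filter.Eventually.of_forall fun γ => hf.def'.aestronglyMeasurable.mul
      (by fun_prop : Continuous fun t => exp (γ * t)).aestronglyMeasurable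
  · filter_upwards [Metric.ball_mem_nhds γ₀ one_pos] with γ hγ
    refine Filter.Eventually.of_forall fun t ht => ?_
    have hγ_le : |γ| ≤ |γ₀| + 1 := by
      rw [Metric.mem_ball, Real.dist_eq] at hγ
      linarith [abs_sub_abs_le_abs_sub γ γ₀]
    have ht_le : |t| ≤ |a| + |b - a| := by
      linarith [abs_sub_abs_le_abs_sub t a, abs_sub_left_of_mem_uIcc (uIoc_subset_uIcc ht)]
    rw [norm_mul, Real.norm_eq_abs, Real.norm_eq_abs, abs_exp]
    gcongr |f t| * exp ?_
    calc γ * t ≤ |γ| * |t| := abs_mul γ t ▸ le_abs_self _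
      _ ≤ (|γ₀| + 1) * (|a| + |b - a|) := by gcongr
  · exact hf.abs.mul_const _
  · exact Filter.Eventually.of_forall fun t _ => by fun_prop

theorem intervalIntegral_lt_intervalIntegral_mul_exp {f : ℝ → ℝ} {τ c : ℝ} (hτ : 0 ≤ τ)
    (hf : ∀ t ∈ Ioc 0 τ, 0 ≤ f t) (hpos : 0 < ∫ t in 0..τ, f t) (hc : 0 < c) :
    ∫ t in 0..τ, f t < ∫ t in 0..τ, f t * exp (c * t) := by
  have hfi := intervalIntegrable_of_integral_ne_zero hpos.ne'
  have hf_ae : 0 ≤ᵐ[volume.restrict (Ioc 0 τ)] f :=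
    (ae_restrict_iff' measurableSet_Ioc).2 (Filter.Eventually.of_forall hf)
  have hsupp : 0 < volume (Function.support f ∩ Ioc 0 τ) :=
    ((integral_pos_iff_support_of_nonneg_ae' (uIoc_of_le hτ ▸ hf_ae) hfi).1 hpos).2
  refine integral_lt_integral_of_ae_le_of_measure_setOfPred_lt_ne_zero hτ hfi
    (hfi.mul_continuousOn (by fun_prop)) ?_ ?_
  · refine (ae_restrict_iff' measurableSet_Ioc).2 (Filter.Eventually.of_forall fun t ht => ?_)
    exact le_mul_of_one_le_right (hf t ht) (one_le_exp (mul_pos hc ht.1).le)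
  · rw [Measure.restrict_apply' measurableSet_Ioc]
    refine (hsupp.trans_le (measure_mono ?_)).ne'
    rintro t ⟨hft, ht⟩
    refine ⟨?_, ht⟩
    exact lt_mul_of_one_lt_right ((hf t ht).lt_of_ne' hft) (one_lt_exp_iff.2 (mul_pos hc ht.1))

theorem stmt_0_general (τ α β : ℝ) (h : ℝ → ℝ) (hτ : 0 < τ)
    (hpos : ∀ a ∈ Set.Icc (0:ℝ) τ, 0 ≤ h a)
    (hint : ∫ a in (0:ℝ)..τ, h a = 1)
    (hαβ : β < α) (hβ : 0 < β) :
    ∃ γ ∈ Set.Ioo (0:ℝ) (α - β),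
      β * (∫ a in (0:ℝ)..τ, h a * Real.exp (γ * a)) + γ = α := by
  set F : ℝ → ℝ := fun γ => β * (∫ a in (0:ℝ)..τ, h a * exp (γ * a)) + γ
  have hF_cont : Continuous F :=
    (continuous_const.mul (continuous_intervalIntegral_mul_exp
      (intervalIntegrable_of_integral_ne_zero (hint ▸ one_ne_zero)))).add continuous_id
  have hF_zero : F 0 = β := by simp [F, hint]
  have hF_gt : α < F (α - β) := by
    have := intervalIntegral_lt_intervalIntegral_mul_exp hτ.le
      (fun t ht => hpos t (Ioc_subset_Icc_self ht)) (hint ▸ one_pos) (sub_pos.2 hαβ)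
    rw [hint] at this
    simp only [F]
    linarith [mul_lt_mul_of_pos_left this hβ]
  obtain ⟨γ, hγ, hFγ⟩ := intermediate_value_Ioo (sub_pos.2 hαβ).le hF_cont.continuousOn
    ⟨hF_zero ▸ hαβ, hF_gt⟩
  exact ⟨γ, hγ, hFγ⟩

/-- characteristic-root existence.  If `α > β > 0` and `h` is a
continuous nonnegative function on `[0, τ]` with `∫₀^τ h = 1`, then there is
`γ ∈ (0, α - β)` with `β ∫₀^τ h a * exp (γ a) da + γ = α`. -/
theorem stmt_0 (τ α β : ℝ) (h : ℝ → ℝ) (hτ : 0 < τ)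
    (hc : ContinuousOn h (Set.Icc 0 τ))
    (hpos : ∀ a ∈ Set.Icc (0:ℝ) τ, 0 ≤ h a)
    (hint : ∫ a in (0:ℝ)..τ, h a = 1)
    (hαβ : β < α) (hβ : 0 < β) :
    ∃ γ ∈ Set.Ioo (0:ℝ) (α - β),
      β * (∫ a in (0:ℝ)..τ, h a * Real.exp (γ * a)) + γ = α :=
  stmt_0_general τ α β h hτ hpos hint hαβ hβ
end

section
/- Let v : [−τ,∞) → ℝ be a bounded C¹ solution of v'(t) = −f(v(t)) + ∫₀^τ h(a) ḡ(v(t−a)) da, where f is continuous, ḡ is continuous and nondecreasing, h ≥ 0 with ∫₀^τ h = 1. Let l = limsup_{t→∞} v(t) and suppose there exist tₙ → ∞ with v(tₙ) → l and v'(tₙ) → 0. Then 0 ≤ −f(l) + ḡ(l). Consequently, if ḡ(l) < f(l) for l > B (for some threshold B), then limsup_{t→∞} v(t) ≤ B. -/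
/-!
Along the fluctuation sequence the equation reads `v'(tₙ) + f(v(tₙ)) = ∫ h(a) ḡ(v(tₙ - a)) da`.
For any `c > limsup v`, eventually `v < c` on the whole delay window, so by monotonicity of `ḡ`
and `∫ h = 1` the right-hand side is at most `ḡ(c)`; letting `n → ∞` gives `f(l) ≤ ḡ(c)`, and
letting `c ↓ l` gives `f(l) ≤ ḡ(l)`, which is incompatible with `ḡ(l) < f(l)` when `l > B`.
-/

open Set Real Filter Topology

theorem intervalIntegral_weighted_le {h φ : ℝ → ℝ} {τ M : ℝ} (hτ : 0 ≤ τ)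
    (hh : ∀ a ∈ Icc 0 τ, 0 ≤ h a) (hh1 : ∫ a in (0:ℝ)..τ, h a = 1)
    (hφ : ContinuousOn φ (Icc 0 τ)) (hφM : ∀ a ∈ Icc 0 τ, φ a ≤ M) :
    ∫ a in (0:ℝ)..τ, h a * φ a ≤ M := by
  have hI : IntervalIntegrable h MeasureTheory.volume 0 τ := by
    by_contra hc
    rw [intervalIntegral.integral_undef hc] at hh1
    exact zero_ne_one hh1
  calc ∫ a in (0:ℝ)..τ, h a * φ a
      ≤ ∫ a in (0:ℝ)..τ, h a * M := by
        refine intervalIntegral.integral_mono_on hτ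
          (hI.mul_continuousOn (by rwa [uIcc_of_le hτ])) (hI.mul_const M) fun a ha => ?_
        exact mul_le_mul_of_nonneg_left (hφM a ha) (hh a ha)
    _ = M := by rw [intervalIntegral.integral_mul_const, hh1, one_mul]

theorem delayIntegral_le_of_le {gbar h v : ℝ → ℝ} {τ s c : ℝ} (hτ : 0 ≤ τ)
    (hgc : Continuous gbar) (hgmono : Monotone gbar)
    (hh : ∀ a ∈ Icc 0 τ, 0 ≤ h a) (hh1 : ∫ a in (0:ℝ)..τ, h a = 1)
    (hv : ∀ a ∈ Icc 0 τ, ContinuousAt v (s - a)) (hvc : ∀ a ∈ Icc 0 τ, v (s - a) ≤ c) :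
    ∫ a in (0:ℝ)..τ, h a * gbar (v (s - a)) ≤ gbar c :=
  intervalIntegral_weighted_le hτ hh hh1
    (fun a ha => (hgc.continuousAt.comp
      ((hv a ha).comp (continuousAt_const.sub continuousAt_id))).continuousWithinAt)
    fun a ha => hgmono (hvc a ha)

theorem le_of_limsup_lt_of_fluctuation {f gbar h v : ℝ → ℝ} {τ l c : ℝ} {t : ℕ → ℝ}
    (hτ : 0 ≤ τ) (hfc : Continuous f) (hgc : Continuous gbar) (hgmono : Monotone gbar)
    (hh : ∀ a ∈ Icc 0 τ, 0 ≤ h a) (hh1 : ∫ a in (0:ℝ)..τ, h a = 1)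
    (hode : ∀ s : ℝ, 0 ≤ s →
      HasDerivAt v (-f (v s) + ∫ a in (0:ℝ)..τ, h a * gbar (v (s - a))) s)
    (hbdd : IsBoundedUnder (· ≤ ·) atTop v) (hc : limsup v atTop < c)
    (ht : Tendsto t atTop atTop) (hvt : Tendsto (fun n => v (t n)) atTop (𝓝 l))
    (hvt' : Tendsto (fun n => deriv v (t n)) atTop (𝓝 0)) :
    f l ≤ gbar c := by
  obtain ⟨T, hT⟩ := eventually_atTop.mp (eventually_lt_of_limsup_lt hc hbdd)
  have hrhs : ∀ᶠ n in atTop, deriv v (t n) + f (v (t n)) ≤ gbar c := by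
    filter_upwards [ht.eventually_ge_atTop (max T 0 + τ)] with n hn
    have hwindow : ∀ a ∈ Icc 0 τ, max T 0 ≤ t n - a := fun a ha => by linarith [ha.2]
    have hdelay := delayIntegral_le_of_le hτ hgc hgmono hh hh1
      (fun a ha => (hode _ ((le_max_right _ _).trans (hwindow a ha))).continuousAt)
      (fun a ha => (hT _ ((le_max_left _ _).trans (hwindow a ha))).le)
    rw [(hode (t n) (by linarith [le_max_right T 0])).deriv]
    linarith
  have hlim : Tendsto (fun n => deriv v (t n) + f (v (t n))) atTop (𝓝 (0 + f l)) :=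
    hvt'.add ((hfc.tendsto l).comp hvt)
  simpa using le_of_tendsto hlim hrhs

/-- dissipativity along fluctuation sequences for the delayed
ODE `v' t = -f (v t) + ∫₀^τ h a * ḡ (v (t - a)) da`. -/
theorem stmt_17 (f gbar h v : ℝ → ℝ) (τ l : ℝ) (hτ : 0 < τ)
    (hfc : Continuous f) (hgc : Continuous gbar) (hgmono : Monotone gbar)
    (hhpos : ∀ a ∈ Set.Icc (0:ℝ) τ, 0 ≤ h a)
    (hhint : ∫ a in (0:ℝ)..τ, h a = 1)
    (hbdd : ∃ C : ℝ, ∀ t : ℝ, |v t| ≤ C)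
    (hode : ∀ t : ℝ, 0 ≤ t →
      HasDerivAt v (-f (v t) + ∫ a in (0:ℝ)..τ, h a * gbar (v (t - a))) t)
    (hl : l = Filter.limsup v Filter.atTop)
    (t : ℕ → ℝ)
    (ht : Filter.Tendsto t Filter.atTop Filter.atTop)
    (hvt : Filter.Tendsto (fun n => v (t n)) Filter.atTop (nhds l))
    (hvt' : Filter.Tendsto (fun n => deriv v (t n)) Filter.atTop (nhds 0)) :
    0 ≤ -f l + gbar l ∧
    ∀ B : ℝ, (∀ x : ℝ, B < x → gbar x < f x) → l ≤ B := by
  obtain ⟨C, hC⟩ := hbdd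
  have hbddAbove : IsBoundedUnder (· ≤ ·) atTop v :=
    isBoundedUnder_of ⟨C, fun s => (abs_le.mp (hC s)).2⟩
  have hfg : f l ≤ gbar l := by
    refine ge_of_tendsto ((hgc.tendsto l).mono_left (nhdsWithin_le_nhds (s := Ioi l)))
      (eventually_nhdsWithin_of_forall fun c (hc : l < c) => ?_)
    exact le_of_limsup_lt_of_fluctuation hτ.le hfc hgc hgmono hhpos hhint hode hbddAbove
      (hl ▸ hc) ht hvt hvt'
  exact ⟨by linarith, fun B hB => not_lt.mp fun hBl => (hB l hBl).not_ge hfg⟩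
end
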